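/- Let T^n(A) := A ⊗_ℚ ⋯ ⊗_ℚ A (n factors) with its commutative ℚ-algebra structure, let F : T^n(A) → B be a ℚ-algebra homomorphism, and let f_F : A → B be the ℚ-linear map f_F(a) = Σ_{i ∈ Fin n} F(ι_i(a)), where ι_i(a) is the pure tensor with a in slot i and 1 elsewhere. Then for every a ∈ A, ψ_n(f_F, a) = F(a ⊗ a ⊗ ⋯ ⊗ a). (This expresses that the algebra homomorphism reconstructed from the n-homomorphism f_F agrees with F on diagonal tensors, hence on their span.) -/

import Mathlib

/-!
Over a ℚ-algebra a linear ODE `y' = g * y` for power series is determined by its constant term.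
Hence `expPS` turns sums of series without constant term into products, and
`expPS (logOneAdd b) = 1 + b T`, both sides solving `y' = (logOneAdd b)' * y`. With `bᵢ = ιᵢ(a)`
one has `f_F(a ^ k) = F (∑ᵢ bᵢ ^ k)`, so `R(f_F, a) = F̂ (∏ᵢ (1 + bᵢ T))`, whose coefficient of
`T ^ n` is `F (∏ᵢ bᵢ) = F (a ⊗ ⋯ ⊗ a)`.
-/

open PowerSeries

noncomputable def logOneAdd {A : Type*} [CommRing A] [Algebra ℚ A] (a : A) : PowerSeries A :=
  PowerSeries.mk fun k => ((-1 : ℚ) ^ (k + 1) / k) • a ^ k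

noncomputable def mapCoeff {A B : Type*} [CommRing A] [CommRing B] [Algebra ℚ A] [Algebra ℚ B]
    (f : A →ₗ[ℚ] B) (p : PowerSeries A) : PowerSeries B :=
  PowerSeries.mk fun k => f (PowerSeries.coeff k p)

noncomputable def expPS {B : Type*} [CommRing B] [Algebra ℚ B] (p : PowerSeries B) : PowerSeries B :=
  PowerSeries.mk fun k => ∑ m ∈ Finset.range (k + 1),
    ((m.factorial : ℚ)⁻¹) • PowerSeries.coeff k (p ^ m)

noncomputable def charFun {A B : Type*} [CommRing A] [CommRing B] [Algebra ℚ A] [Algebra ℚ B]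
    (f : A →ₗ[ℚ] B) (a : A) : PowerSeries B :=
  expPS (mapCoeff f (logOneAdd a))

noncomputable def psi {A B : Type*} [CommRing A] [CommRing B] [Algebra ℚ A] [Algebra ℚ B]
    (f : A →ₗ[ℚ] B) (a : A) (k : ℕ) : B :=
  PowerSeries.coeff k (charFun f a)

def IsNHom {A B : Type*} [CommRing A] [CommRing B] [Algebra ℚ A] [Algebra ℚ B]
    (f : A →ₗ[ℚ] B) (n : ℕ) : Prop :=
  f 1 = n • (1 : B) ∧ ∀ k, n + 1 ≤ k → ∀ a : A, psi f a k = 0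

noncomputable def frob {A B : Type*} [CommRing A] [CommRing B] [Algebra ℚ A] [Algebra ℚ B]
    (f : A →ₗ[ℚ] B) : (k : ℕ) → (Fin k → A) → B
  | 0, _ => 1
  | k + 1, a =>
      f (a (Fin.last k)) * frob f k (fun i => a i.castSucc)
        - ∑ i : Fin k, frob f k
            (Function.update (fun j : Fin k => a j.castSucc) i (a i.castSucc * a (Fin.last k)))

open scoped TensorProduct

/-- The pure tensor with `a` in slot `i` and `1` in all other slots, as a linear map. -/
noncomputable def iota {A : Type*} [CommRing A] [Algebra ℚ A] (n : ℕ) (i : Fin n) :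
    A →ₗ[ℚ] (⨂[ℚ] (_ : Fin n), A) :=
  (PiTensorProduct.tprod ℚ (s := fun _ : Fin n => A)).toLinearMap (fun _ => 1) i

/-- The linear map `f_F(a) = Σ_i F(ι_i(a))` associated to an algebra
homomorphism `F : T^n(A) → B`. -/
noncomputable def fF {A B : Type*} [CommRing A] [CommRing B] [Algebra ℚ A] [Algebra ℚ B]
    (n : ℕ) (F : (⨂[ℚ] (_ : Fin n), A) →ₐ[ℚ] B) : A →ₗ[ℚ] B :=
  ∑ i : Fin n, F.toLinearMap ∘ₗ iota n i

section Exponential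

lemma coeff_pow_eq_zero_of_lt {R : Type*} [CommSemiring R] {p : R⟦X⟧}
    (hp : constantCoeff p = 0) {k m : ℕ} (h : k < m) : coeff k (p ^ m) = 0 :=
  X_pow_dvd_iff.mp (pow_dvd_pow_of_dvd (X_dvd_iff.mpr hp) m) k h

variable {R : Type*} [CommRing R] [Algebra ℚ R]

noncomputable def partialExp (p : R⟦X⟧) (M : ℕ) : R⟦X⟧ :=
  ∑ m ∈ Finset.range (M + 1), ((m.factorial : ℚ)⁻¹) • p ^ m

lemma coeff_expPS_eq_coeff_partialExp {p : R⟦X⟧} (hp : constantCoeff p = 0) {k M : ℕ}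
    (h : k ≤ M) : coeff k (expPS p) = coeff k (partialExp p M) := by
  simp only [expPS, partialExp, coeff_mk, map_sum, coeff_smul]
  refine Finset.sum_subset (Finset.range_subset_range.mpr (by omega)) fun m hm hm' => ?_
  simp only [Finset.mem_range] at hm hm'
  rw [coeff_pow_eq_zero_of_lt hp (by omega), smul_zero]

lemma derivative_partialExp_succ (p : R⟦X⟧) (M : ℕ) :
    d⁄dX R (partialExp p (M + 1)) = d⁄dX R p * partialExp p M := by
  rw [partialExp, map_sum, Finset.sum_range_succ', partialExp, Finset.mul_sum]
  simp only [pow_zero, map_rat_smul, Derivation.map_one_eq_zero, smul_zero, add_zero]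
  refine Finset.sum_congr rfl fun m _ => ?_
  rw [Derivation.leibniz_pow, Nat.add_sub_cancel, smul_eq_mul, ← Nat.cast_smul_eq_nsmul ℚ,
    smul_smul, mul_comm (d⁄dX R p), ← smul_mul_assoc, Nat.factorial_succ]
  congr 2
  push_cast
  field_simp

lemma constantCoeff_expPS (p : R⟦X⟧) : constantCoeff (expPS p) = 1 := by
  rw [← coeff_zero_eq_constantCoeff_apply, expPS, coeff_mk]
  simp

lemma derivative_expPS {p : R⟦X⟧} (hp : constantCoeff p = 0) :
    d⁄dX R (expPS p) = d⁄dX R p * expPS p := by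
  ext n
  rw [coeff_derivative, coeff_expPS_eq_coeff_partialExp hp le_rfl, ← coeff_derivative,
    derivative_partialExp_succ, coeff_mul, coeff_mul]
  refine Finset.sum_congr rfl fun x hx => ?_
  rw [Finset.HasAntidiagonal.mem_antidiagonal] at hx
  rw [coeff_expPS_eq_coeff_partialExp hp (show x.2 ≤ n by omega)]

lemma eq_zero_of_derivative_eq_mul {g z : R⟦X⟧} (h : d⁄dX R z = g * z)
    (h0 : constantCoeff z = 0) : z = 0 := by
  ext n
  induction n using Nat.strong_induction_on with
  | _ n ih =>
    rcases n with _ | n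
    · simpa using h0
    · have hn : coeff (n + 1) z * (n + 1) = 0 := by
        rw [← coeff_derivative, h, coeff_mul]
        refine Finset.sum_eq_zero fun x hx => ?_
        rw [Finset.HasAntidiagonal.mem_antidiagonal] at hx
        rw [ih x.2 (by omega), map_zero, mul_zero]
      have hu : IsUnit ((n : R) + 1) := by
        simpa using (IsUnit.mk0 ((n + 1 : ℕ) : ℚ) (by positivity)).map (algebraMap ℚ R)
      simpa using hu.mul_left_eq_zero.mp hn

lemma eq_of_derivative_eq_mul {g y z : R⟦X⟧} (hy : d⁄dX R y = g * y) (hz : d⁄dX R z = g * z)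
    (h0 : constantCoeff y = constantCoeff z) : y = z :=
  sub_eq_zero.mp <| eq_zero_of_derivative_eq_mul (g := g)
    (by rw [map_sub, hy, hz, mul_sub]) (by rw [map_sub, h0, sub_self])

lemma expPS_add {p q : R⟦X⟧} (hp : constantCoeff p = 0) (hq : constantCoeff q = 0) :
    expPS (p + q) = expPS p * expPS q := by
  refine eq_of_derivative_eq_mul (g := d⁄dX R (p + q))
    (derivative_expPS (by rw [map_add, hp, hq, add_zero])) ?_ ?_
  · rw [Derivation.leibniz, smul_eq_mul, smul_eq_mul, derivative_expPS hp, derivative_expPS hq,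
      map_add]
    ring
  · rw [map_mul, constantCoeff_expPS, constantCoeff_expPS, constantCoeff_expPS, mul_one]

lemma expPS_zero : expPS (0 : R⟦X⟧) = 1 := by
  ext k
  rw [expPS, coeff_mk, Finset.sum_eq_single 0 (fun m _ hm => by rw [zero_pow hm, map_zero,
    smul_zero]) (by simp)]
  simp

lemma expPS_sum {ι : Type*} (s : Finset ι) (p : ι → R⟦X⟧)
    (h : ∀ i ∈ s, constantCoeff (p i) = 0) :
    expPS (∑ i ∈ s, p i) = ∏ i ∈ s, expPS (p i) := by
  induction s using Finset.cons_induction with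
  | empty => simp [expPS_zero]
  | cons i s hi ih =>
    rw [Finset.forall_mem_cons] at h
    rw [Finset.sum_cons, Finset.prod_cons, expPS_add h.1
      (by rw [map_sum]; exact Finset.sum_eq_zero h.2), ih h.2]

lemma expPS_map {S : Type*} [CommRing S] [Algebra ℚ S] (F : R →ₐ[ℚ] S) (p : R⟦X⟧) :
    expPS (map (F : R →+* S) p) = map (F : R →+* S) (expPS p) := by
  ext k
  simp only [expPS, coeff_map, coeff_mk, map_sum, ← map_pow, map_rat_smul]

end Exponential

section Logarithm

variable {R : Type*} [CommRing R] [Algebra ℚ R]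

lemma constantCoeff_logOneAdd (a : R) : constantCoeff (logOneAdd a) = 0 := by
  rw [← coeff_zero_eq_constantCoeff_apply, logOneAdd, coeff_mk]
  simp

lemma coeff_derivative_logOneAdd (a : R) (n : ℕ) :
    coeff n (d⁄dX R (logOneAdd a)) = ((-1 : ℚ) ^ n) • a ^ (n + 1) := by
  rw [coeff_derivative, logOneAdd, coeff_mk, smul_mul_assoc,
    show a ^ (n + 1) * ((n : R) + 1) = ((n + 1 : ℕ) : ℚ) • a ^ (n + 1) by
      rw [Nat.cast_smul_eq_nsmul, nsmul_eq_mul]; push_cast; ring,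
    smul_smul]
  congr 1
  push_cast
  field_simp
  ring

lemma derivative_logOneAdd_mul (a : R) :
    d⁄dX R (logOneAdd a) * (1 + C a * X) = C a := by
  ext n
  rw [mul_add, mul_one, ← mul_assoc, mul_comm _ (C a), mul_assoc, map_add, coeff_C_mul, coeff_C]
  rcases n with _ | n
  · simp [coeff_derivative_logOneAdd]
  · rw [coeff_succ_mul_X, coeff_derivative_logOneAdd, coeff_derivative_logOneAdd, mul_smul_comm,
      ← pow_succ', ← add_smul, if_neg n.succ_ne_zero, pow_succ (-1 : ℚ)]
    simp

lemma expPS_logOneAdd (a : R) : expPS (logOneAdd a) = 1 + C a * X :=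
  eq_of_derivative_eq_mul (derivative_expPS (constantCoeff_logOneAdd a))
    (by rw [derivative_logOneAdd_mul, map_add, derivative_one, Derivation.leibniz, derivative_X,
      derivative_C, smul_zero, add_zero, zero_add, smul_eq_mul, mul_one])
    (by rw [constantCoeff_expPS]; simp)

end Logarithm

lemma coeff_card_prod_one_add_C_mul_X {R ι : Type*} [CommSemiring R] (s : Finset ι)
    (b : ι → R) : coeff s.card (∏ i ∈ s, (1 + C (b i) * X)) = ∏ i ∈ s, b i := by
  have hpoly := Polynomial.coeff_prod_of_natDegree_le s
    (fun i => 1 + Polynomial.C (b i) * Polynomial.X) 1 fun i _ => by compute_degree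
  simp only [mul_one, Polynomial.coeff_add, Polynomial.coeff_one, Polynomial.coeff_C_mul_X] at hpoly
  rw [← Polynomial.coeff_coe, ← Polynomial.coeToPowerSeries.ringHom_apply, map_prod] at hpoly
  simpa [Polynomial.coeToPowerSeries.ringHom_apply] using hpoly

section TensorPower

variable {A B : Type*} [CommRing A] [CommRing B] [Algebra ℚ A] [Algebra ℚ B] {n : ℕ}

lemma iota_apply (i : Fin n) (x : A) : iota n i x = PiTensorProduct.tprod ℚ (Pi.mulSingle i x) :=
  rfl

lemma iota_pow (i : Fin n) (x : A) (k : ℕ) : iota n i (x ^ k) = iota n i x ^ k := by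
  rw [iota_apply, iota_apply, Pi.mulSingle_pow, ← PiTensorProduct.tprodMonoidHom_apply, map_pow]
  rfl

lemma prod_iota (x : A) : ∏ i, iota n i x = PiTensorProduct.tprod ℚ (fun _ : Fin n => x) := by
  simp only [iota_apply, ← PiTensorProduct.tprodMonoidHom_apply, ← map_prod,
    Finset.univ_prod_mulSingle]

lemma mapCoeff_fF_logOneAdd (F : (⨂[ℚ] (_ : Fin n), A) →ₐ[ℚ] B) (a : A) :
    mapCoeff (fF n F) (logOneAdd a) = map (F : _ →+* B) (∑ i, logOneAdd (iota n i a)) := by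
  ext k
  simp [mapCoeff, logOneAdd, fF, iota_pow, map_rat_smul, Finset.smul_sum]

end TensorPower

/-- for a ℚ-algebra homomorphism `F : T^n(A) → B` and the associated
`n`-homomorphism `f_F`, one has `ψ_n(f_F, a) = F(a ⊗ ⋯ ⊗ a)` for every `a`. -/
theorem stmt17 {A B : Type*} [CommRing A] [CommRing B] [Algebra ℚ A] [Algebra ℚ B]
    (n : ℕ) (F : (⨂[ℚ] (_ : Fin n), A) →ₐ[ℚ] B) (a : A) :
    psi (fF n F) a n = F (PiTensorProduct.tprod ℚ (fun _ : Fin n => a)) := by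
  rw [psi, charFun, mapCoeff_fF_logOneAdd, expPS_map, coeff_map,
    expPS_sum _ _ fun i _ => constantCoeff_logOneAdd _]
  simp_rw [expPS_logOneAdd]
  have hcoeff := coeff_card_prod_one_add_C_mul_X Finset.univ fun i : Fin n => iota n i a
  rw [Finset.card_fin] at hcoeff
  rw [hcoeff, prod_iota, AlgHom.coe_toRingHom]
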